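/- arXiv:1504.04258 — 3 statements merged into one kernel-verified Lean document; each statement's English description precedes it below -/
import Mathlib

section
/- The function F(r,θ) = r − exp(−1/(1+cos θ)²)·sin²(tan(θ/2)), extended by F(r, θ) = r at θ = π + 2kπ, is continuous on ℝ⁺ × ℝ and 2π-periodic in θ. -/
open Real

open Classical in
noncomputable def F (r θ : ℝ) : ℝ :=
  if ∃ k : ℤ, θ = π + 2 * π * k then r
  else r - Real.exp (-(1 / (1 + Real.cos θ) ^ 2)) * Real.sin (Real.tan (θ / 2)) ^ 2

/-!
Writing `exp (-1 / x)` for `x > 0` and `0` for `x ≤ 0` as Mathlib's continuous `expNegInvGlue`,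
the exceptional case of `F` is absorbed into the closed form
`F r θ = r - expNegInvGlue ((1 + cos θ) ^ 2) * sin (tan (θ / 2)) ^ 2`.
The first factor is continuous and vanishes exactly where `cos θ = -1`; away from these points
`tan (θ / 2)` is continuous, and at them the bounded factor `sin (tan (θ / 2)) ^ 2` is killed by
the vanishing one. Periodicity follows from that of `cos` and of `tan` (period `π`).
-/

open Filter Topology

theorem continuous_mul_of_bounded_of_continuousAt_of_ne_zero {X R : Type*}
    [TopologicalSpace X] [NonUnitalSeminormedRing R] {f g : X → R} (hf : Continuous f)
    {C : ℝ} (hg_bdd : ∀ x, ‖g x‖ ≤ C) (hg : ∀ x, f x ≠ 0 → ContinuousAt g x) :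
    Continuous fun x => f x * g x := by
  refine continuous_iff_continuousAt.2 fun x => ?_
  by_cases hfx : f x = 0
  · have hf0 : Tendsto f (𝓝 x) (𝓝 0) := hfx ▸ hf.continuousAt
    simpa [ContinuousAt, hfx] using
      hf0.zero_mul_isBoundedUnder_le (isBoundedUnder_of ⟨C, hg_bdd⟩)
  · exact hf.continuousAt.mul (hg x hfx)

theorem exists_int_eq_pi_add_two_pi_mul_iff (θ : ℝ) :
    (∃ k : ℤ, θ = π + 2 * π * k) ↔ cos θ = -1 := by
  rw [cos_eq_neg_one_iff]
  exact exists_congr fun k => by constructor <;> intro h <;> linarith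

theorem cos_half_ne_zero {θ : ℝ} (h : cos θ ≠ -1) : cos (θ / 2) ≠ 0 := by
  intro hc
  apply h
  rw [show θ = 2 * (θ / 2) by ring, cos_two_mul, hc]
  norm_num

theorem F_eq_sub_expNegInvGlue_mul (r θ : ℝ) :
    F r θ = r - expNegInvGlue ((1 + cos θ) ^ 2) * sin (tan (θ / 2)) ^ 2 := by
  unfold F
  split_ifs with hθ
  · rw [exists_int_eq_pi_add_two_pi_mul_iff] at hθ
    simp [hθ]
  · rw [exists_int_eq_pi_add_two_pi_mul_iff] at hθ
    have hpos : 0 < (1 + cos θ) ^ 2 := pow_two_pos_of_ne_zero (fun h => hθ (by linarith))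
    rw [expNegInvGlue, if_neg hpos.not_ge, one_div]

theorem continuous_expNegInvGlue_mul_sin_tan_sq :
    Continuous fun θ => expNegInvGlue ((1 + cos θ) ^ 2) * sin (tan (θ / 2)) ^ 2 := by
  refine continuous_mul_of_bounded_of_continuousAt_of_ne_zero
    ((expNegInvGlue.contDiff (n := 0)).continuous.comp (by fun_prop)) (C := 1)
    (fun θ => by simpa using sin_sq_le_one _) fun θ hθ => ?_
  have hcos : cos θ ≠ -1 := fun h => hθ (by simp [h])
  have htan : ContinuousAt (fun θ : ℝ => tan (θ / 2)) θ :=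
    (continuousAt_tan.2 (cos_half_ne_zero hcos)).comp (f := fun θ : ℝ => θ / 2) (by fun_prop)
  exact (continuous_sin.continuousAt.comp htan).pow 2

theorem continuous_F_uncurry : Continuous fun p : ℝ × ℝ => F p.1 p.2 := by
  simp only [F_eq_sub_expNegInvGlue_mul]
  exact continuous_fst.sub (continuous_expNegInvGlue_mul_sin_tan_sq.comp continuous_snd)

theorem F_add_two_pi (r θ : ℝ) : F r (θ + 2 * π) = F r θ := by
  rw [F_eq_sub_expNegInvGlue_mul, F_eq_sub_expNegInvGlue_mul, cos_add_two_pi,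
    show (θ + 2 * π) / 2 = θ / 2 + π by ring, tan_add_pi]

theorem stmt_2 :
    ContinuousOn (fun p : ℝ × ℝ => F p.1 p.2) (Set.Ici 0 ×ˢ Set.univ) ∧
    ∀ r θ : ℝ, F r (θ + 2 * π) = F r θ :=
  ⟨continuous_F_uncurry.continuousOn, F_add_two_pi⟩
end

section
/- For any integer n ≥ 0 and any x₀ ≤ 0, the limit as (x,y) → (x₀,0) (with r = √(x²+y²), through points where r + x > 0) of exp(−1/r²)·exp(−(r/(r+x))²)/(r+x)ⁿ equals 0. -/
open Real Filter

noncomputable def rad (p : ℝ × ℝ) : ℝ := Real.sqrt (p.1 ^ 2 + p.2 ^ 2)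

/-!
With `g t = tⁿ·exp(-t²)` the quantity factors as `g (1/r) · g (r/(r+x))`. The function `g` is
continuous and vanishes at infinity, hence bounded, so it suffices that one argument tends to
`+∞`: at the origin this is `1/r`, while for `x₀ < 0` it is `r/(r+x)`, since `r → -x₀ > 0` and
`r + x → 0⁺`.
-/

open Topology

lemma tendsto_pow_mul_exp_neg_sq_cocompact (n : ℕ) :
    Tendsto (fun x : ℝ => x ^ n * exp (-x ^ 2)) (cocompact ℝ) (𝓝 0) := by
  rw [tendsto_zero_iff_norm_tendsto_zero]
  simpa [abs_pow, abs_of_pos (exp_pos _)] using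
    tendsto_rpow_abs_mul_exp_neg_mul_sq_cocompact one_pos n

lemma isBoundedUnder_norm_pow_mul_exp_neg_sq {α : Type*} (n : ℕ) (l : Filter α) (φ : α → ℝ) :
    IsBoundedUnder (· ≤ ·) l fun a => ‖φ a ^ n * exp (-φ a ^ 2)‖ := by
  let g : ZeroAtInftyContinuousMap ℝ ℝ := ⟨⟨fun x => x ^ n * exp (-x ^ 2), by fun_prop⟩,
    tendsto_pow_mul_exp_neg_sq_cocompact n⟩
  obtain ⟨C, hC⟩ := isBounded_iff_forall_norm_le.1 g.isBounded_range
  exact isBoundedUnder_of ⟨C, fun a => hC _ ⟨φ a, rfl⟩⟩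

lemma exp_mul_exp_div_pow_eq {r s : ℝ} (hr : r ≠ 0) (n : ℕ) :
    exp (-(1 / r ^ 2)) * exp (-(r / s) ^ 2) / s ^ n =
      (r⁻¹ ^ n * exp (-r⁻¹ ^ 2)) * ((r / s) ^ n * exp (-(r / s) ^ 2)) := by
  simp only [div_pow, one_div, inv_pow]
  field_simp

lemma continuous_rad : Continuous rad := by
  unfold rad; fun_prop

lemma rad_mk_zero (x : ℝ) : rad (x, 0) = |x| := by
  simp [rad, sqrt_sq_eq_abs]

lemma abs_fst_le_rad (p : ℝ × ℝ) : |p.1| ≤ rad p :=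
  sqrt_sq_eq_abs p.1 ▸ sqrt_le_sqrt (by nlinarith [sq_nonneg p.2])

lemma rad_add_fst_pos {p : ℝ × ℝ} (hp : p.2 ≠ 0 ∨ 0 < p.1) : 0 < rad p + p.1 := by
  rcases hp with hy | hx
  · have : |p.1| < rad p :=
      sqrt_sq_eq_abs p.1 ▸ sqrt_lt_sqrt (sq_nonneg _) (lt_add_of_pos_right _ (by positivity))
    linarith [neg_abs_le p.1]
  · linarith [sqrt_nonneg (p.1 ^ 2 + p.2 ^ 2), show rad p = sqrt (p.1 ^ 2 + p.2 ^ 2) from rfl]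

lemma rad_pos {p : ℝ × ℝ} (hp : p.2 ≠ 0 ∨ 0 < p.1) : 0 < rad p := by
  linarith [rad_add_fst_pos hp, abs_fst_le_rad p, le_abs_self p.1]

lemma tendsto_rad_nhdsWithin (x₀ : ℝ) (s : Set (ℝ × ℝ)) :
    Tendsto rad (𝓝[s] (x₀, 0)) (𝓝 |x₀|) :=
  rad_mk_zero x₀ ▸ continuous_rad.continuousWithinAt

lemma tendsto_rad_nhdsGT_zero :
    Tendsto rad (𝓝[{p : ℝ × ℝ | p.2 ≠ 0 ∨ 0 < p.1}] (0, 0)) (𝓝[>] 0) :=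
  tendsto_nhdsWithin_iff.2
    ⟨by simpa using tendsto_rad_nhdsWithin 0 _, eventually_nhdsWithin_of_forall fun _ => rad_pos⟩

lemma tendsto_rad_add_fst_nhdsGT_zero {x₀ : ℝ} (hx₀ : x₀ ≤ 0) :
    Tendsto (fun p => rad p + p.1) (𝓝[{p : ℝ × ℝ | p.2 ≠ 0 ∨ 0 < p.1}] (x₀, 0)) (𝓝[>] 0) := by
  refine tendsto_nhdsWithin_iff.2
    ⟨?_, eventually_nhdsWithin_of_forall fun _ => rad_add_fst_pos⟩
  have hfst : Tendsto Prod.fst (𝓝[{p : ℝ × ℝ | p.2 ≠ 0 ∨ 0 < p.1}] (x₀, 0)) (𝓝 x₀) :=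
    continuous_fst.continuousWithinAt
  simpa [abs_of_nonpos hx₀] using (tendsto_rad_nhdsWithin x₀ _).add hfst

theorem stmt_6 (n : ℕ) (x₀ : ℝ) (hx₀ : x₀ ≤ 0) :
    Filter.Tendsto
      (fun p : ℝ × ℝ =>
        Real.exp (-(1 / rad p ^ 2)) * Real.exp (-(rad p / (rad p + p.1)) ^ 2) /
          (rad p + p.1) ^ n)
      (nhdsWithin (x₀, 0) {p : ℝ × ℝ | p.2 ≠ 0 ∨ 0 < p.1})
      (nhds 0) := by
  refine Tendsto.congr' (eventually_nhdsWithin_of_forall fun p hp =>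
    (exp_mul_exp_div_pow_eq (rad_pos hp).ne' n).symm) ?_
  have hg := (tendsto_pow_mul_exp_neg_sq_cocompact n).mono_left atTop_le_cocompact
  rcases hx₀.eq_or_lt with rfl | hneg
  · exact (hg.comp (tendsto_inv_nhdsGT_zero.comp tendsto_rad_nhdsGT_zero))
      |>.zero_mul_isBoundedUnder_le (isBoundedUnder_norm_pow_mul_exp_neg_sq n _ _)
  · have hratio : Tendsto (fun p => rad p / (rad p + p.1))
        (𝓝[{p : ℝ × ℝ | p.2 ≠ 0 ∨ 0 < p.1}] (x₀, 0)) atTop :=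
      (tendsto_rad_nhdsWithin x₀ _).pos_mul_atTop (abs_pos.2 hneg.ne)
        (tendsto_inv_nhdsGT_zero.comp (tendsto_rad_add_fst_nhdsGT_zero hx₀))
    exact isBoundedUnder_le_mul_tendsto_zero (isBoundedUnder_norm_pow_mul_exp_neg_sq n _ _)
      (hg.comp hratio)
end

section
/- Let g : ℝ → ℝ be continuous, 2π-periodic, nonnegative, and let Ω = {(g(θ)cos θ, g(θ)sin θ) : θ ∈ ℝ} ⊆ ℝ². If a curve (r(t), θ(t)) in polar coordinates satisfies r(t) − g(θ(t)) → 0 as t → ∞, θ(t) → ∞, and r(t) is bounded, then every point of Ω is a limit point of the curve, i.e., Ω is contained in the ω-limit set of the curve. -/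
/-!
Write `h φ = (g φ cos φ, g φ sin φ)`, so that `Ω` is the range of the `2π`-periodic map `h`.
The curve stays within `|r t - g (θ t)|` of `h (θ t)`, so it has the same cluster points as
`h ∘ θ`. Since `θ` is continuous and unbounded above, by the intermediate value theorem it passes
through `x + 2πn` for arbitrarily large times, where `h (θ t) = h x`.
-/

open Real Filter Topology

theorem Continuous.frequently_mem_of_tendsto_atTop {α δ : Type*}
    [ConditionallyCompleteLinearOrder α] [DenselyOrdered α] [TopologicalSpace α] [OrderTopology α]
    [LinearOrder δ] [TopologicalSpace δ] [OrderClosedTopology δ] {f : α → δ}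
    (hf : Continuous f) (hlim : Tendsto f atTop atTop) {S : Set δ} (hS : ∀ b, ∃ y ∈ S, b ≤ y) :
    ∃ᶠ t in atTop, f t ∈ S := by
  rw [frequently_atTop]
  intro T
  obtain ⟨y, hyS, hTy⟩ := hS (f T)
  obtain ⟨T₀, hT₀⟩ := eventually_atTop.1 (hlim.eventually_ge_atTop y)
  obtain ⟨t, ht, hft⟩ := intermediate_value_Icc (le_max_left T T₀) hf.continuousOn
    ⟨hTy, hT₀ _ (le_max_right T T₀)⟩
  exact ⟨t, ht.1, hft ▸ hyS⟩

theorem Function.Periodic.frequently_comp_eq_of_tendsto_atTop {α β : Type*}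
    [ConditionallyCompleteLinearOrder α] [DenselyOrdered α] [TopologicalSpace α] [OrderTopology α]
    {h : ℝ → β} {c : ℝ} (hh : Function.Periodic h c) (hc : 0 < c) {f : α → ℝ}
    (hf : Continuous f) (hlim : Tendsto f atTop atTop) (x : ℝ) :
    ∃ᶠ t in atTop, h (f t) = h x := by
  refine hf.frequently_mem_of_tendsto_atTop hlim (S := {y | h y = h x}) fun b => ?_
  obtain ⟨n, hn⟩ := exists_nat_ge ((b - x) / c)
  exact ⟨x + n * c, hh.nat_mul n x, by linarith [(div_le_iff₀ hc).1 hn]⟩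

theorem MapClusterPt.of_tendsto_dist {ι X : Type*} [PseudoMetricSpace X] {l : Filter ι}
    {u v : ι → X} {p : X} (hu : MapClusterPt p l u)
    (huv : Tendsto (fun i => dist (v i) (u i)) l (𝓝 0)) : MapClusterPt p l v := by
  rw [Metric.nhds_basis_ball.mapClusterPt_iff_frequently]
  intro ε hε
  have hnear := hu.frequently (Metric.ball_mem_nhds p (half_pos hε))
  have hclose : ∀ᶠ i in l, dist (v i) (u i) < ε / 2 :=
    (tendsto_order.1 huv).2 _ (half_pos hε)
  refine (hnear.and_eventually hclose).mono fun i ⟨hui, hvi⟩ => ?_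
  rw [Metric.mem_ball]
  linarith [dist_triangle (v i) (u i) p]

theorem dist_polar_le (ρ ρ' φ : ℝ) :
    dist (ρ * cos φ, ρ * sin φ) (ρ' * cos φ, ρ' * sin φ) ≤ |ρ - ρ'| := by
  rw [Prod.dist_eq, Real.dist_eq, Real.dist_eq, ← sub_mul, ← sub_mul, abs_mul, abs_mul]
  exact max_le (mul_le_of_le_one_right (abs_nonneg _) (abs_cos_le_one φ))
    (mul_le_of_le_one_right (abs_nonneg _) (abs_sin_le_one φ))

theorem stmt_16_general (g : ℝ → ℝ) (hper : ∀ x, g (x + 2 * π) = g x)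
    (Ω : Set (ℝ × ℝ)) (hΩ : Ω = {p : ℝ × ℝ | ∃ x : ℝ, p = (g x * cos x, g x * sin x)})
    (r θ : ℝ → ℝ) (hθc : Continuous θ)
    (hF : Tendsto (fun t => r t - g (θ t)) atTop (nhds 0))
    (hthInf : Tendsto θ atTop atTop) :
    ∀ p ∈ Ω, MapClusterPt p atTop (fun t => (r t * cos (θ t), r t * sin (θ t))) := by
  subst hΩ
  rintro _ ⟨x, rfl⟩
  set h : ℝ → ℝ × ℝ := fun φ => (g φ * cos φ, g φ * sin φ)
  have hh : Function.Periodic h (2 * π) := fun φ => by simp [h, hper]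
  have hhit : MapClusterPt (h x) atTop (h ∘ θ) := by
    rw [mapClusterPt_iff_frequently]
    exact fun s hs => (hh.frequently_comp_eq_of_tendsto_atTop two_pi_pos hθc hthInf x).mono
      fun t ht => show h (θ t) ∈ s from ht ▸ mem_of_mem_nhds hs
  refine hhit.of_tendsto_dist (squeeze_zero (fun _ => dist_nonneg)
    (fun t => dist_polar_le (r t) (g (θ t)) (θ t)) ?_)
  simpa using hF.abs

theorem stmt_16 (g : ℝ → ℝ) (hg : Continuous g) (hper : ∀ x, g (x + 2 * π) = g x)
    (hnn : ∀ x, 0 ≤ g x)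
    (Ω : Set (ℝ × ℝ)) (hΩ : Ω = {p : ℝ × ℝ | ∃ x : ℝ, p = (g x * cos x, g x * sin x)})
    (r θ : ℝ → ℝ) (hrc : Continuous r) (hθc : Continuous θ)
    (hF : Tendsto (fun t => r t - g (θ t)) atTop (nhds 0))
    (hthInf : Tendsto θ atTop atTop)
    (hbd : ∃ M : ℝ, ∀ t, |r t| ≤ M) :
    ∀ p ∈ Ω, MapClusterPt p atTop (fun t => (r t * cos (θ t), r t * sin (θ t))) :=
  stmt_16_general g hper Ω hΩ r θ hθc hF hthInf
end
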